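/- arXiv:math/0408088 — 3 statements merged into one kernel-verified Lean document; each statement's English description precedes it below -/
import Mathlib

section
/- In characteristic 0, the distinct partitions μ of n−1 obtained by removing a removable node from λ have pairwise distinct values E(μ); equivalently, the m eigenvalues E(λ↓_u), u = 1..m, of E_{n−1} on the restriction of S^λ to Σ_{n−1} are distinct. -/
/-! Removing the removable node at the end of row `r` lowers the content sum by that node's
content `λ_r - 1 - r`. For removable rows `r < r'` we have `λ_{r'} ≤ λ_{r+1} < λ_r`, so the
contents of removable nodes strictly decrease down the diagram and are pairwise distinct. -/

/-- `l` is the list of parts of a partition of `n`. -/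
def IsPartition (n : ℕ) (l : List ℕ) : Prop :=
  l.Pairwise (· ≥ ·) ∧ (∀ x ∈ l, 0 < x) ∧ l.sum = n

/-- row `r` (0-indexed) of the Young diagram of `l` ends in a removable node. -/
def Removable (l : List ℕ) (r : ℕ) : Prop :=
  r < l.length ∧ l.getD (r + 1) 0 < l.getD r 0

/-- a node can be added at the end of row `u` (0-indexed) of the Young diagram of `l`. -/
def Addable (l : List ℕ) (u : ℕ) : Prop :=
  u ≤ l.length ∧ (u = 0 ∨ l.getD u 0 < l.getD (u - 1) 0)

/-- the partition obtained from `l` by removing the removable node in row `r`. -/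
def removeNode (l : List ℕ) (r : ℕ) : List ℕ := l.set r (l.getD r 0 - 1)

/-- the partition obtained from `l` by adding the addable node in row `u`. -/
def addNode (l : List ℕ) (u : ℕ) : List ℕ :=
  if u < l.length then l.set u (l.getD u 0 + 1) else l ++ [1]

/-- The (0-indexed) cells of the Young diagram of `l`. -/
def cells (l : List ℕ) : Finset (ℕ × ℕ) :=
  (Finset.range l.length).biUnion (fun r => (Finset.range (l.getD r 0)).image (fun c => (r, c)))

/-- The sum of the contents (residues) `c - r` over the cells of `[l]`. -/
def contentSum (l : List ℕ) : ℤ := ∑ p ∈ cells l, ((p.2 : ℤ) - (p.1 : ℤ))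

lemma mem_cells {l : List ℕ} {p : ℕ × ℕ} :
    p ∈ cells l ↔ p.1 < l.length ∧ p.2 < l.getD p.1 0 := by
  obtain ⟨i, c⟩ := p
  simp only [cells, Finset.mem_biUnion, Finset.mem_range, Finset.mem_image, Prod.mk.injEq]
  constructor
  · rintro ⟨i, hi, c, hc, rfl, rfl⟩
    exact ⟨hi, hc⟩
  · rintro ⟨hi, hc⟩
    exact ⟨i, hi, c, hc, rfl, rfl⟩

lemma length_removeNode (l : List ℕ) (r : ℕ) : (removeNode l r).length = l.length :=
  List.length_set ..

lemma getD_removeNode (l : List ℕ) (r i : ℕ) :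
    (removeNode l r).getD i 0 = if i = r then l.getD r 0 - 1 else l.getD i 0 := by
  simp only [removeNode, List.getD_eq_getElem?_getD, List.getElem?_set]
  grind

lemma lt_length_of_getD_pos {l : List ℕ} {r : ℕ} (hr : 0 < l.getD r 0) : r < l.length := by
  by_contra h
  rw [List.getD_eq_default _ _ (not_lt.mp h)] at hr
  exact hr.false

lemma cells_removeNode {l : List ℕ} {r : ℕ} (hr : 0 < l.getD r 0) :
    cells (removeNode l r) = (cells l).erase (r, l.getD r 0 - 1) := by
  have hrl := lt_length_of_getD_pos hr
  ext ⟨i, c⟩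
  simp only [Finset.mem_erase, mem_cells, length_removeNode, getD_removeNode, ne_eq,
    Prod.mk.injEq]
  grind

lemma contentSum_removeNode {l : List ℕ} {r : ℕ} (hr : 0 < l.getD r 0) :
    contentSum (removeNode l r) = contentSum l - ((l.getD r 0 : ℤ) - 1 - r) := by
  have hmem : (r, l.getD r 0 - 1) ∈ cells l :=
    mem_cells.mpr ⟨lt_length_of_getD_pos hr, Nat.sub_one_lt_of_lt hr⟩
  rw [contentSum, cells_removeNode hr, Finset.sum_erase_eq_sub hmem, contentSum]
  push_cast [Nat.cast_sub hr]
  ring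

lemma antitone_getD {l : List ℕ} (hl : l.Pairwise (· ≥ ·)) : Antitone (l.getD · 0) := by
  intro i j hij
  dsimp only
  rcases lt_or_ge j l.length with hj | hj
  · rw [List.getD_eq_getElem _ _ hj, List.getD_eq_getElem _ _ (hij.trans_lt hj)]
    exact List.sortedGE_iff_getElem_ge_getElem_of_le.mp hl.sortedGE hij
  · rw [List.getD_eq_default _ _ hj]
    exact Nat.zero_le _

lemma Removable.getD_pos {l : List ℕ} {r : ℕ} (hr : Removable l r) : 0 < l.getD r 0 :=
  Nat.zero_lt_of_lt hr.2

lemma Removable.content_lt {l : List ℕ} (hl : l.Pairwise (· ≥ ·)) {r r' : ℕ}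
    (hr : Removable l r) (h : r < r') :
    (l.getD r' 0 : ℤ) - r' < (l.getD r 0 : ℤ) - r := by
  have hle : l.getD r' 0 ≤ l.getD (r + 1) 0 := antitone_getD hl h
  have hlt := hr.2
  omega

/-- (Characteristic zero.) The partitions of `n - 1` obtained by
removing distinct removable nodes from `l` have pairwise distinct (integer) content
sums; these are the eigenvalues of `E_{n-1}` on the restriction of `S^l`. -/
theorem contentSum_removeNode_injective (n : ℕ) (l : List ℕ) (hl : IsPartition n l)
    (r r' : ℕ) (hr : Removable l r) (hr' : Removable l r') (hne : r ≠ r') :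
    contentSum (removeNode l r) ≠ contentSum (removeNode l r') := by
  rw [contentSum_removeNode hr.getD_pos, contentSum_removeNode hr'.getD_pos]
  rcases hne.lt_or_gt with h | h
  · have := hr.content_lt hl.1 h
    omega
  · have := hr'.content_lt hl.1 h
    omega
end

section
/- Let M be a module over a ring, z an endomorphism of M, and 0 = M₀ ⊂ M₁ ⊂ ... ⊂ M_m = M a filtration by z-invariant submodules such that z acts as the scalar z_u on M_u/M_{u−1}. If the minimal polynomial of z on M has degree m, then there exists τ ∈ M such that for every u ∈ {1,...,m}, the vector τ·∏_{i=u+1}^m (z − z_i) lies in M_u but not in M_{u−1}. -/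
/-!
Over the PID `F[X]`, the `z`-module `V` has a vector `τ` whose annihilator is the whole
annihilator `(minpoly z)`. The factor `X - c i` maps `M i` into `M (i - 1)`, so the product
over `i ∈ [u+1, m]` sends `τ` into `M u`. Were the image in `M (u - 1)`, the remaining factors
with `i ≤ u - 1` would push it down to `M 0 = 0`, so `τ` would be killed by a monic polynomial
of degree `m - 1`, which `minpoly z`, of degree `m`, cannot divide.
-/

open Polynomial

theorem Module.End.exists_minpoly_dvd_of_aeval_apply_eq_zero {F V : Type*} [Field F]
    [AddCommGroup V] [Module F V] [FiniteDimensional F V] (z : Module.End F V) :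
    ∃ τ : V, ∀ p : F[X], aeval z p τ = 0 → minpoly F z ∣ p := by
  obtain ⟨x, hx⟩ := Module.exists_ker_toSpanSingleton_eq_annihilator F[X] (Module.AEval' z)
  obtain ⟨τ, rfl⟩ := (Module.AEval'.of z).surjective x
  rw [← span_minpoly_eq_annihilator] at hx
  refine ⟨τ, fun p hp => ?_⟩
  have hker : p ∈ LinearMap.ker (LinearMap.toSpanSingleton F[X] _ (Module.AEval'.of z τ)) := by
    rw [LinearMap.mem_ker, LinearMap.toSpanSingleton_apply, ← Module.AEval.of_aeval_smul]
    simp [Module.End.smul_def, hp]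
  rwa [hx, Ideal.mem_span_singleton] at hker

theorem aeval_prod_Icc_X_sub_C_apply_mem {F V : Type*} [Field F] [AddCommGroup V] [Module F V]
    {M : ℕ → Submodule F V} {z : Module.End F V} {c : ℕ → F} {a b : ℕ}
    (hscal : ∀ u < b, ∀ v ∈ M (u + 1), z v - c (u + 1) • v ∈ M u) (hab : a ≤ b)
    {v : V} (hv : v ∈ M b) : aeval z (∏ i ∈ Finset.Icc (a + 1) b, (X - C (c i))) v ∈ M a := by
  induction b, hab using Nat.le_induction generalizing v with
  | base => simpa using hv
  | succ b hab ih =>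
    rw [Finset.prod_Icc_succ_top (by omega), map_mul, Module.End.mul_apply]
    refine ih (fun u hu => hscal u (by omega)) ?_
    simpa [Module.algebraMap_end_apply] using hscal b (by omega) v hv

theorem exists_tau_general (F V : Type) [Field F] [AddCommGroup V] [Module F V]
    [FiniteDimensional F V] (m : ℕ) (M : ℕ → Submodule F V)
    (z : Module.End F V) (c : ℕ → F)
    (hM0 : M 0 = ⊥) (hMm : M m = ⊤)
    (hscal : ∀ u < m, ∀ v ∈ M (u + 1), z v - c (u + 1) • v ∈ M u)
    (hdeg : (minpoly F z).natDegree = m) :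
    ∃ τ : V, ∀ u, 1 ≤ u → u ≤ m →
      (Polynomial.aeval z (∏ i ∈ Finset.Icc (u + 1) m, (X - C (c i)))) τ ∈ M u ∧
      (Polynomial.aeval z (∏ i ∈ Finset.Icc (u + 1) m, (X - C (c i)))) τ ∉ M (u - 1) := by
  obtain ⟨τ, hτ⟩ := z.exists_minpoly_dvd_of_aeval_apply_eq_zero
  refine ⟨τ, fun u hu1 hum => ⟨aeval_prod_Icc_X_sub_C_apply_mem hscal hum (hMm ▸ trivial), ?_⟩⟩
  intro hmem
  set P := ∏ i ∈ Finset.Icc 1 (u - 1), (X - C (c i))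
  set Q := ∏ i ∈ Finset.Icc (u + 1) m, (X - C (c i))
  have hP : P.Monic := monic_prod_of_monic _ _ fun i _ => monic_X_sub_C (c i)
  have hQ : Q.Monic := monic_prod_of_monic _ _ fun i _ => monic_X_sub_C (c i)
  have hkill : aeval z (P * Q) τ = 0 := by
    rw [map_mul, Module.End.mul_apply, ← Submodule.mem_bot F, ← hM0]
    exact aeval_prod_Icc_X_sub_C_apply_mem (fun w hw => hscal w (by omega)) (Nat.zero_le _) hmem
  have hPQ : (P * Q).natDegree = m - 1 := by
    rw [hP.natDegree_mul hQ]
    simp only [P, Q, natDegree_finsetProd_X_sub_C_eq_card, Nat.card_Icc]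
    omega
  have := natDegree_le_of_dvd (hτ _ hkill) (hP.mul hQ).ne_zero
  omega

/-- Let `M` be a finite-dimensional `F`-vector space, `z` an
endomorphism, and `0 = M₀ ⊂ M₁ ⊂ ⋯ ⊂ M_m = M` a filtration by `z`-invariant
subspaces on whose successive quotients `z` acts as the scalar `c u`. If the
minimal polynomial of `z` has degree `m`, then there is `τ ∈ M` such that for
every `1 ≤ u ≤ m` the vector `τ·∏_{i=u+1}^m (z - c i)` lies in `M_u ∖ M_{u-1}`. -/
theorem exists_tau (F V : Type) [Field F] [AddCommGroup V] [Module F V]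
    [FiniteDimensional F V] (m : ℕ) (M : ℕ → Submodule F V)
    (z : Module.End F V) (c : ℕ → F)
    (hM0 : M 0 = ⊥) (hMm : M m = ⊤)
    (hlt : ∀ u < m, M u < M (u + 1))
    (hinv : ∀ u ≤ m, ∀ v ∈ M u, z v ∈ M u)
    (hscal : ∀ u < m, ∀ v ∈ M (u + 1), z v - c (u + 1) • v ∈ M u)
    (hdeg : (minpoly F z).natDegree = m) :
    ∃ τ : V, ∀ u, 1 ≤ u → u ≤ m →
      (Polynomial.aeval z (∏ i ∈ Finset.Icc (u + 1) m, (X - C (c i)))) τ ∈ M u ∧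
      (Polynomial.aeval z (∏ i ∈ Finset.Icc (u + 1) m, (X - C (c i)))) τ ∉ M (u - 1) :=
  exists_tau_general F V m M z c hM0 hMm hscal hdeg
end

section
/- Let t be a λ-tableau and i = t_{r,c} its entry at node (r, c). In the Specht module S^λ, the polytabloid e_t satisfies e_t · Σ_j (i, j) = (c − r)·e_t, where j ranges over all entries of t lying in columns strictly to the left of column c, together with the entries strictly above i in column c. -/
open Finsupp Equiv

/-- A `l`-tableau with entries in `Fin n`. -/
def IsTableau (n : ℕ) (l : List ℕ) (t : ℕ × ℕ → Fin n) : Prop :=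
  Set.BijOn t (cells l) Set.univ

/-- the row in which symbol `x` appears in the tableau `t`. -/
def rowOf (n : ℕ) (l : List ℕ) (t : ℕ × ℕ → Fin n) (x : Fin n) : ℕ :=
  ((cells l).filter (fun p => t p = x)).sup (fun p => p.1)

/-- the column in which symbol `x` appears in the tableau `t`. -/
def colOf (n : ℕ) (l : List ℕ) (t : ℕ × ℕ → Fin n) (x : Fin n) : ℕ :=
  ((cells l).filter (fun p => t p = x)).sup (fun p => p.2)

/-- the tabloid (row function) of the tableau `t`. -/
def rowTab (n : ℕ) (l : List ℕ) (t : ℕ × ℕ → Fin n) : Fin n → ℕ :=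
  fun x => rowOf n l t x

/-- the column stabilizer of the tableau `t`. -/
def colStab (n : ℕ) (l : List ℕ) (t : ℕ × ℕ → Fin n) : Finset (Perm (Fin n)) :=
  Finset.univ.filter (fun π => ∀ p ∈ cells l, colOf n l t (π (t p)) = p.2)

/-- the polytabloid of the tableau `t`. -/
noncomputable def polytabloid (F : Type) [Field F] (n : ℕ) (l : List ℕ) (t : ℕ × ℕ → Fin n) : (Fin n → ℕ) →₀ F :=
  ∑ π ∈ colStab n l t,
    ((Equiv.Perm.sign π : ℤ) : F) • Finsupp.single (rowTab n l (fun p => π (t p))) (1 : F)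

/-- The Specht module `S^l`, as the span of the polytabloids inside the tabloid space. -/
noncomputable def SpechtSub (F : Type) [Field F] (n : ℕ) (l : List ℕ) : Submodule F ((Fin n → ℕ) →₀ F) :=
  Submodule.span F {v | ∃ t, IsTableau n l t ∧ v = polytabloid F n l t}

/-- action of `Perm (Fin n)` on row functions (tabloids). -/
instance permArrow (n : ℕ) : MulAction (Perm (Fin n)) (Fin n → ℕ) where
  smul π T := fun x => T (π⁻¹ x)
  one_smul _ := rfl
  mul_smul _ _ _ := rfl

/-- the permutation representation of `Perm (Fin n)` on the space of tabloids. -/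
noncomputable def rho (F : Type) [Field F] (n : ℕ) : Representation F (Perm (Fin n)) ((Fin n → ℕ) →₀ F) :=
  { toFun := fun g => Finsupp.lmapDomain F F (g • ·)
    map_one' := by ext; simp
    map_mul' := fun x y => by ext; simp [mul_smul] }

/-- the sum of all transpositions in the group algebra of `Perm (Fin n)`. -/
noncomputable def transpSum (F : Type) [Field F] (n : ℕ) : MonoidAlgebra F (Perm (Fin n)) :=
  ∑ p ∈ Finset.univ.filter (fun p : Fin n × Fin n => p.1 < p.2),
    MonoidAlgebra.single (Equiv.swap p.1 p.2) (1 : F)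

/-!
Write `e_t = ∑_{π ∈ C_t} sgn π {π t}` and let `c' < c` be a column. For each `π`, the entry `y` of
`π t` lying in column `c'` and in the row of `i` satisfies `(i y){π t} = {π t}`; the remaining terms
`sgn π (i x){π t}` with `x ≠ y` in column `c'` cancel in pairs under `(π, x) ↦ ((x y) π, y)`, a
sign-reversing involution. So the transpositions `(i x)`, `x` in column `c'`, sum on `e_t` to `e_t`
(the Garnir relation for column `c'` and `{i}`), which gives `c e_t` over the `c` columns left of `i`.
Each of the `r` transpositions `(i j)` with `j` above `i` lies in `C_t` and acts on `e_t` by `-1`.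
-/

open Finset

theorem mem_cells_iff {l : List ℕ} {q : ℕ × ℕ} :
    q ∈ cells l ↔ q.1 < l.length ∧ q.2 < l.getD q.1 0 := by
  obtain ⟨a, b⟩ := q
  simp [cells]

theorem mk_mem_cells_of_le_snd {l : List ℕ} {a b b' : ℕ} (h : (a, b) ∈ cells l) (hb : b' ≤ b) :
    (a, b') ∈ cells l := by
  rw [mem_cells_iff] at h ⊢
  exact ⟨h.1, hb.trans_lt h.2⟩

theorem mk_mem_cells_of_le_fst {l : List ℕ} (hl : l.Pairwise (· ≥ ·)) {a a' b : ℕ}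
    (h : (a, b) ∈ cells l) (ha : a' ≤ a) : (a', b) ∈ cells l := by
  rw [mem_cells_iff] at h ⊢
  obtain ⟨hal, hb⟩ := h
  have ha'l : a' < l.length := ha.trans_lt hal
  refine ⟨ha'l, hb.trans_le ?_⟩
  rw [List.getD_eq_getElem _ _ hal, List.getD_eq_getElem _ _ ha'l]
  rcases ha.eq_or_lt with rfl | hlt
  · rfl
  · exact List.pairwise_iff_getElem.1 hl _ _ ha'l hal hlt

theorem card_filter_cells_above {l : List ℕ} (hl : l.Pairwise (· ≥ ·)) {p : ℕ × ℕ}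
    (hp : p ∈ cells l) : #((cells l).filter (fun q => q.2 = p.2 ∧ q.1 < p.1)) = p.1 := by
  have hcol : (cells l).filter (fun q => q.2 = p.2 ∧ q.1 < p.1) =
      (range p.1).image (fun a => (a, p.2)) := by
    ext ⟨a, b⟩
    simp only [mem_filter, mem_image, mem_range, Prod.mk.injEq]
    constructor
    · rintro ⟨-, rfl, ha⟩
      exact ⟨a, ha, rfl, rfl⟩
    · rintro ⟨a, ha, rfl, rfl⟩
      exact ⟨mk_mem_cells_of_le_fst hl hp ha.le, rfl, ha⟩
  rw [hcol, card_image_of_injective _ fun a b h => (Prod.mk.inj h).1, card_range]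

theorem swap_smul_of_apply_eq {n : ℕ} {T : Fin n → ℕ} {x y : Fin n} (h : T x = T y) :
    swap x y • T = T := by
  funext z
  change T ((swap x y)⁻¹ z) = T z
  rw [swap_inv]
  rcases eq_or_ne z x with rfl | hzx
  · rw [swap_apply_left, h]
  rcases eq_or_ne z y with rfl | hzy
  · rw [swap_apply_right, h]
  · rw [swap_apply_of_ne_of_ne hzx hzy]

namespace IsTableau

variable {n : ℕ} {l : List ℕ} {t : ℕ × ℕ → Fin n}

theorem filter_cells_apply_eq (ht : IsTableau n l t) {q : ℕ × ℕ} (hq : q ∈ cells l) :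
    (cells l).filter (fun p => t p = t q) = {q} := by
  ext p
  simp only [mem_filter, mem_singleton]
  exact ⟨fun h => ht.injOn h.1 hq h.2, by rintro rfl; exact ⟨hq, rfl⟩⟩

theorem rowOf_apply (ht : IsTableau n l t) {q : ℕ × ℕ} (hq : q ∈ cells l) :
    rowOf n l t (t q) = q.1 := by
  rw [rowOf, ht.filter_cells_apply_eq hq, sup_singleton]

theorem colOf_apply (ht : IsTableau n l t) {q : ℕ × ℕ} (hq : q ∈ cells l) :
    colOf n l t (t q) = q.2 := by
  rw [colOf, ht.filter_cells_apply_eq hq, sup_singleton]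

theorem mk_rowOf_colOf_mem_cells (ht : IsTableau n l t) (x : Fin n) :
    (rowOf n l t x, colOf n l t x) ∈ cells l := by
  obtain ⟨q, hq, rfl⟩ := ht.surjOn (Set.mem_univ x)
  rwa [ht.rowOf_apply hq, ht.colOf_apply hq]

theorem apply_rowOf_colOf (ht : IsTableau n l t) (x : Fin n) :
    t (rowOf n l t x, colOf n l t x) = x := by
  obtain ⟨q, hq, rfl⟩ := ht.surjOn (Set.mem_univ x)
  rw [ht.rowOf_apply hq, ht.colOf_apply hq]

theorem sum_filter_cells (ht : IsTableau n l t) {M : Type*} [AddCommMonoid M]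
    (P : ℕ × ℕ → Prop) [DecidablePred P] (f : Fin n → M) :
    ∑ q ∈ (cells l).filter P, f (t q) = ∑ x with P (rowOf n l t x, colOf n l t x), f x := by
  refine sum_nbij' t (fun x => (rowOf n l t x, colOf n l t x)) ?_ ?_ ?_ ?_ (fun _ _ => rfl)
  · intro q hq
    simp only [mem_filter, mem_univ, true_and] at hq ⊢
    rw [ht.rowOf_apply hq.1, ht.colOf_apply hq.1]
    exact hq.2
  · intro x hx
    simp only [mem_filter, mem_univ, true_and] at hx ⊢
    exact ⟨ht.mk_rowOf_colOf_mem_cells x, hx⟩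
  · intro q hq
    rw [mem_filter] at hq
    rw [ht.rowOf_apply hq.1, ht.colOf_apply hq.1]
  · intro x _
    exact ht.apply_rowOf_colOf x

theorem mem_colStab_iff (ht : IsTableau n l t) {π : Perm (Fin n)} :
    π ∈ colStab n l t ↔ π ∈ MulAction.stabilizer (Perm (Fin n)) (colOf n l t) := by
  rw [colStab, mem_filter, MulAction.mem_stabilizer_iff, ← eq_inv_smul_iff, funext_iff]
  simp only [mem_univ, true_and]
  change _ ↔ ∀ x, colOf n l t x = colOf n l t (π⁻¹⁻¹ x)
  simp only [inv_inv]
  refine ⟨fun h x => ?_, fun h q hq => by rw [← ht.colOf_apply hq]; exact (h _).symm⟩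
  conv_rhs => rw [← ht.apply_rowOf_colOf x, h _ (ht.mk_rowOf_colOf_mem_cells x)]

theorem colOf_perm_apply (ht : IsTableau n l t) {π : Perm (Fin n)} (hπ : π ∈ colStab n l t)
    (x : Fin n) : colOf n l t (π x) = colOf n l t x :=
  congrFun (MulAction.mem_stabilizer_iff.1 (inv_mem (ht.mem_colStab_iff.1 hπ))) x

theorem swap_mem_colStab (ht : IsTableau n l t) {x y : Fin n}
    (h : colOf n l t x = colOf n l t y) : swap x y ∈ colStab n l t :=
  ht.mem_colStab_iff.2 (swap_smul_of_apply_eq h)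

theorem inv_mem_colStab (ht : IsTableau n l t) {π : Perm (Fin n)} (hπ : π ∈ colStab n l t) :
    π⁻¹ ∈ colStab n l t :=
  ht.mem_colStab_iff.2 (inv_mem (ht.mem_colStab_iff.1 hπ))

theorem mul_mem_colStab (ht : IsTableau n l t) {σ π : Perm (Fin n)} (hσ : σ ∈ colStab n l t)
    (hπ : π ∈ colStab n l t) : σ * π ∈ colStab n l t :=
  ht.mem_colStab_iff.2 (mul_mem (ht.mem_colStab_iff.1 hσ) (ht.mem_colStab_iff.1 hπ))

end IsTableau

section Polytabloid

variable {F : Type} [Field F] {n : ℕ} {l : List ℕ} {t : ℕ × ℕ → Fin n}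

theorem rowTab_perm_comp (π : Perm (Fin n)) :
    rowTab n l (fun p => π (t p)) = π • rowTab n l t := by
  funext x
  change rowOf n l _ x = rowOf n l t (π⁻¹ x)
  unfold rowOf
  congr 1
  refine filter_congr fun q _ => ?_
  rw [Perm.eq_inv_iff_eq]

theorem polytabloid_eq_sum :
    polytabloid F n l t =
      ∑ π ∈ colStab n l t, ((Perm.sign π : ℤ) : F) • single (π • rowTab n l t) (1 : F) := by
  simp only [polytabloid, rowTab_perm_comp]

theorem rho_single (σ : Perm (Fin n)) (T : Fin n → ℕ) (a : F) :
    rho F n σ (single T a) = single (σ • T) a :=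
  mapDomain_single

theorem rho_polytabloid (σ : Perm (Fin n)) :
    rho F n σ (polytabloid F n l t) =
      ∑ π ∈ colStab n l t, ((Perm.sign π : ℤ) : F) • single ((σ * π) • rowTab n l t) (1 : F) := by
  simp only [polytabloid_eq_sum, map_sum, map_smul, rho_single, mul_smul]

theorem IsTableau.rho_polytabloid_of_mem_colStab (ht : IsTableau n l t) {σ : Perm (Fin n)}
    (hσ : σ ∈ colStab n l t) :
    rho F n σ (polytabloid F n l t) = ((Perm.sign σ : ℤ) : F) • polytabloid F n l t := by
  rw [rho_polytabloid, polytabloid_eq_sum, Finset.smul_sum]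
  refine sum_nbij' (σ * ·) (σ⁻¹ * ·) (fun π hπ => ht.mul_mem_colStab hσ hπ)
    (fun π hπ => ht.mul_mem_colStab (ht.inv_mem_colStab hσ) hπ)
    (fun π _ => inv_mul_cancel_left σ π) (fun π _ => mul_inv_cancel_left σ π) fun π _ => ?_
  rw [smul_smul, ← Int.cast_mul, ← Units.val_mul, Perm.sign_mul, ← mul_assoc, Int.units_mul_self,
    one_mul]

end Polytabloid

-- The entry of the tableau `π ∘ t` in column `c` and in the row of `π ∘ t` containing `i` (which
-- sits in `π ∘ t` where `π⁻¹ i` sits in `t`).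
def rowMate (n : ℕ) (l : List ℕ) (t : ℕ × ℕ → Fin n) (i : Fin n) (c : ℕ) (π : Perm (Fin n)) :
    Fin n :=
  π (t (rowOf n l t (π⁻¹ i), c))

namespace IsTableau

variable {F : Type} [Field F] {n : ℕ} {l : List ℕ} {t : ℕ × ℕ → Fin n} {i : Fin n} {c : ℕ}
  {π : Perm (Fin n)}

theorem mk_rowOf_inv_mem_cells (ht : IsTableau n l t) (hπ : π ∈ colStab n l t)
    (hc : c < colOf n l t i) : (rowOf n l t (π⁻¹ i), c) ∈ cells l := by
  refine mk_mem_cells_of_le_snd (ht.mk_rowOf_colOf_mem_cells (π⁻¹ i)) ?_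
  rw [ht.colOf_perm_apply (ht.inv_mem_colStab hπ)]
  exact hc.le

theorem rowOf_inv_rowMate (ht : IsTableau n l t) (hπ : π ∈ colStab n l t)
    (hc : c < colOf n l t i) : rowOf n l t (π⁻¹ (rowMate n l t i c π)) = rowOf n l t (π⁻¹ i) := by
  rw [rowMate, Perm.inv_eq_iff_eq.2 rfl, ht.rowOf_apply (ht.mk_rowOf_inv_mem_cells hπ hc)]

theorem colOf_rowMate (ht : IsTableau n l t) (hπ : π ∈ colStab n l t)
    (hc : c < colOf n l t i) : colOf n l t (rowMate n l t i c π) = c := by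
  rw [rowMate, ht.colOf_perm_apply hπ, ht.colOf_apply (ht.mk_rowOf_inv_mem_cells hπ hc)]

theorem rowMate_ne (ht : IsTableau n l t) (hπ : π ∈ colStab n l t) (hc : c < colOf n l t i) :
    rowMate n l t i c π ≠ i := by
  intro h
  have := ht.colOf_rowMate hπ hc
  rw [h] at this
  omega

theorem rowMate_swap_mul (ht : IsTableau n l t) (hπ : π ∈ colStab n l t)
    (hc : c < colOf n l t i) {x : Fin n} (hx : colOf n l t x = c) :
    rowMate n l t i c (swap x (rowMate n l t i c π) * π) = x := by
  have hix : i ≠ x := by rintro rfl; omega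
  have hfix : (swap x (rowMate n l t i c π) * π)⁻¹ i = π⁻¹ i := by
    rw [mul_inv_rev, swap_inv, Perm.mul_apply,
      swap_apply_of_ne_of_ne hix (ht.rowMate_ne hπ hc).symm]
  rw [rowMate, hfix, Perm.mul_apply]
  exact swap_apply_right _ _

theorem smul_rowTab_swap_rowMate (ht : IsTableau n l t) (hπ : π ∈ colStab n l t)
    (hc : c < colOf n l t i) :
    (swap i (rowMate n l t i c π) * π) • rowTab n l t = π • rowTab n l t := by
  rw [mul_smul]
  exact swap_smul_of_apply_eq (ht.rowOf_inv_rowMate hπ hc).symm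

-- `(i y)(x y) = (x y)(i x)`, and `(x y)` fixes the tabloid of `(i x) π t`, where `x` has moved into
-- the row of `y`.
theorem smul_rowTab_swap_swap_rowMate (ht : IsTableau n l t) (hπ : π ∈ colStab n l t)
    (hc : c < colOf n l t i) {x : Fin n} (hx : colOf n l t x = c)
    (hxy : x ≠ rowMate n l t i c π) :
    (swap i (rowMate n l t i c π) * (swap x (rowMate n l t i c π) * π)) • rowTab n l t =
      (swap i x * π) • rowTab n l t := by
  set y := rowMate n l t i c π
  have hix : i ≠ x := by rintro rfl; omega
  have hiy : i ≠ y := (ht.rowMate_ne hπ hc).symm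
  have hconj : swap i y * swap x y = swap x y * swap i x := by
    rw [mul_swap_eq_swap_mul (swap x y) i x, swap_apply_of_ne_of_ne hix hiy, swap_apply_left]
  rw [← mul_assoc, hconj, mul_assoc, mul_smul]
  refine swap_smul_of_apply_eq ?_
  change rowOf n l t (π⁻¹ ((swap i x)⁻¹ x)) = rowOf n l t (π⁻¹ ((swap i x)⁻¹ y))
  rw [swap_inv, swap_apply_right, swap_apply_of_ne_of_ne hiy.symm hxy.symm,
    ht.rowOf_inv_rowMate hπ hc]

theorem sum_sigma_erase_rowMate_eq_zero (ht : IsTableau n l t) (hc : c < colOf n l t i) :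
    ∑ z ∈ (colStab n l t).sigma
        (fun π => ({x | colOf n l t x = c} : Finset (Fin n)).erase (rowMate n l t i c π)),
      ((Perm.sign z.1 : ℤ) : F) • single ((swap i z.2 * z.1) • rowTab n l t) (1 : F) = 0 := by
  have hmem : ∀ z : (_ : Perm (Fin n)) × Fin n, z ∈ (colStab n l t).sigma
      (fun π => ({x | colOf n l t x = c} : Finset (Fin n)).erase (rowMate n l t i c π)) ↔
      z.1 ∈ colStab n l t ∧ z.2 ≠ rowMate n l t i c z.1 ∧ colOf n l t z.2 = c := by
    intro z
    simp only [mem_sigma, mem_erase, mem_filter, mem_univ, true_and]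
  refine sum_involution (fun z _ => ⟨swap z.2 (rowMate n l t i c z.1) * z.1, rowMate n l t i c z.1⟩)
    ?_ ?_ ?_ ?_
  · rintro ⟨π, x⟩ hz
    obtain ⟨hπ, hxy, hx⟩ := (hmem _).1 hz
    dsimp only at hπ hxy hx ⊢
    rw [ht.smul_rowTab_swap_swap_rowMate hπ hc hx hxy, Perm.sign_mul, Perm.sign_swap hxy,
      neg_one_mul, Units.val_neg, Int.cast_neg, neg_smul, add_neg_cancel]
  · rintro ⟨π, x⟩ hz _ h
    exact ((hmem _).1 hz).2.1 (congrArg Sigma.snd h).symm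
  · rintro ⟨π, x⟩ hz
    obtain ⟨hπ, hxy, hx⟩ := (hmem _).1 hz
    refine (hmem _).2 ⟨ht.mul_mem_colStab (ht.swap_mem_colStab ?_) hπ, ?_, ht.colOf_rowMate hπ hc⟩
    · rw [hx, ht.colOf_rowMate hπ hc]
    · dsimp only
      rw [ht.rowMate_swap_mul hπ hc hx]
      exact hxy.symm
  · rintro ⟨π, x⟩ hz
    obtain ⟨hπ, -, hx⟩ := (hmem _).1 hz
    dsimp only
    rw [ht.rowMate_swap_mul hπ hc hx, swap_comm, swap_mul_self_mul]

theorem sum_rho_swap_column (ht : IsTableau n l t) (hc : c < colOf n l t i) :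
    ∑ x with colOf n l t x = c, rho F n (swap i x) (polytabloid F n l t) =
      polytabloid F n l t := by
  simp only [rho_polytabloid]
  rw [Finset.sum_comm]
  calc _ = ∑ π ∈ colStab n l t,
        (((Perm.sign π : ℤ) : F) • single (π • rowTab n l t) (1 : F) +
          ∑ x ∈ ({x | colOf n l t x = c} : Finset (Fin n)).erase (rowMate n l t i c π),
            ((Perm.sign π : ℤ) : F) • single ((swap i x * π) • rowTab n l t) (1 : F)) := by
        refine sum_congr rfl fun π hπ => ?_
        have hmate : rowMate n l t i c π ∈ ({x | colOf n l t x = c} : Finset (Fin n)) := by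
          simpa using ht.colOf_rowMate hπ hc
        rw [← ht.smul_rowTab_swap_rowMate hπ hc]
        exact (Finset.add_sum_erase _ _ hmate).symm
    _ = polytabloid F n l t := by
        rw [sum_add_distrib, Finset.sum_sigma', ht.sum_sigma_erase_rowMate_eq_zero hc, add_zero,
          polytabloid_eq_sum]

theorem sum_rho_swap_cols_lt (ht : IsTableau n l t) {p : ℕ × ℕ} (hp : p ∈ cells l) :
    ∑ q ∈ (cells l).filter (fun q => q.2 < p.2), rho F n (swap (t p) (t q)) (polytabloid F n l t) =
      (p.2 : F) • polytabloid F n l t := by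
  rw [ht.sum_filter_cells (fun q => q.2 < p.2) (fun x => rho F n (swap (t p) x) _),
    ← sum_fiberwise_of_maps_to (g := colOf n l t) (t := range p.2) (by simp)]
  have hcol : ∀ c ∈ range p.2,
      ∑ x ∈ ({x | colOf n l t x < p.2} : Finset (Fin n)) with colOf n l t x = c,
        rho F n (swap (t p) x) (polytabloid F n l t) = polytabloid F n l t := by
    intro c hc
    have hc' : c < colOf n l t (t p) := by rwa [ht.colOf_apply hp, ← mem_range]
    rw [filter_filter]
    refine (sum_congr (filter_congr fun x _ => ?_) fun _ _ => rfl).trans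
      (ht.sum_rho_swap_column hc')
    exact ⟨And.right, fun hx => ⟨hx ▸ mem_range.1 hc, hx⟩⟩
  rw [sum_congr rfl hcol, sum_const, card_range, Nat.cast_smul_eq_nsmul]

theorem sum_rho_swap_above (ht : IsTableau n l t) (hl : l.Pairwise (· ≥ ·)) {p : ℕ × ℕ}
    (hp : p ∈ cells l) :
    ∑ q ∈ (cells l).filter (fun q => q.2 = p.2 ∧ q.1 < p.1),
        rho F n (swap (t p) (t q)) (polytabloid F n l t) =
      -(p.1 : F) • polytabloid F n l t := by
  have hterm : ∀ q ∈ (cells l).filter (fun q => q.2 = p.2 ∧ q.1 < p.1),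
      rho F n (swap (t p) (t q)) (polytabloid F n l t) = -polytabloid F n l t := by
    intro q hq
    obtain ⟨hq, hcol, hrow⟩ := mem_filter.1 hq
    have hne : t p ≠ t q := fun h => hrow.ne' (by rw [← ht.rowOf_apply hq, ← h, ht.rowOf_apply hp])
    rw [ht.rho_polytabloid_of_mem_colStab
        (ht.swap_mem_colStab (by rw [ht.colOf_apply hp, ht.colOf_apply hq, hcol])),
      Perm.sign_swap hne, Units.val_neg, Units.val_one, Int.cast_neg, Int.cast_one, neg_one_smul]
  rw [sum_congr rfl hterm, sum_const, card_filter_cells_above hl hp, ← Nat.cast_smul_eq_nsmul F,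
    smul_neg, neg_smul]

end IsTableau

/-- Let `t` be a `λ`-tableau with entry `i = t (r, c)` at the
node `(r, c)`. Then the polytabloid satisfies `e_t · ∑_j (i, j) = (c − r) · e_t`,
where `j` ranges over the entries of `t` in columns strictly left of column `c`
together with the entries strictly above `i` in column `c`. -/
theorem garnir_relation (F : Type) [Field F] (n : ℕ) (l : List ℕ)
    (hl : IsPartition n l) (t : ℕ × ℕ → Fin n) (ht : IsTableau n l t)
    (p : ℕ × ℕ) (hp : p ∈ cells l) :
    ((rho F n).asAlgebraHom
        (∑ q ∈ (cells l).filter (fun q => q.2 < p.2 ∨ (q.2 = p.2 ∧ q.1 < p.1)),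
          MonoidAlgebra.single (Equiv.swap (t p) (t q)) (1 : F)))
        (polytabloid F n l t) =
      (((p.2 : ℤ) - (p.1 : ℤ) : ℤ) : F) • polytabloid F n l t := by
  have hdisj : Disjoint ((cells l).filter (fun q => q.2 < p.2))
      ((cells l).filter (fun q => q.2 = p.2 ∧ q.1 < p.1)) :=
    disjoint_filter.2 fun _ _ hlt hab => hlt.ne hab.1
  rw [filter_or, sum_union hdisj]
  simp only [map_add, map_sum, Representation.asAlgebraHom_single, one_smul, LinearMap.add_apply,
    LinearMap.sum_apply]
  rw [ht.sum_rho_swap_cols_lt hp, ht.sum_rho_swap_above hl.1 hp]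
  push_cast
  module
end
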